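/- Fix f ∈ (0,1), β ∈ [0,1), and c ≥ 0. Define α₀(f,c) = ((√f + √(f c² + 4))²)/(4(1−f)) and t(α) = √(α f (1−f))·c + α f + 1. Then there exists α ≥ α₀(f,c) with t(α) ≤ α(1−f)(1−β)/(1 − β(1−f)) if and only if f(1 − β(1−f)) < (1−f)(1−β); i.e., the integrity and service-availability constraints (Equations 1–3) are simultaneously satisfiable iff f/(1−f) · (1 − β(1−f))/(1−β) < 1. -/
import Mathlib


theorem lightchain_feasibility_iff
    (f β c : ℝ) (hf : f ∈ Set.Ioo (0:ℝ) 1) (hβ : β ∈ Set.Ico (0:ℝ) 1) (hc : 0 ≤ c) :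
    (∃ α : ℝ, α ≥ ((Real.sqrt f + Real.sqrt (f * c ^ 2 + 4)) ^ 2) / (4 * (1 - f)) ∧
      Real.sqrt (α * f * (1 - f)) * c + α * f + 1
        ≤ α * (1 - f) * (1 - β) / (1 - β * (1 - f)))
    ↔ f * (1 - β * (1 - f)) < (1 - f) * (1 - β) := by
  obtain ⟨hf0, hf1⟩ := hf
  obtain ⟨hβ0, hβ1⟩ := hβ
  have hD : 0 < 1 - β * (1 - f) := by nlinarith
  have hα₀pos : 0 < ((Real.sqrt f + Real.sqrt (f * c ^ 2 + 4)) ^ 2) / (4 * (1 - f)) := by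
    have h1 : 0 < Real.sqrt (f * c ^ 2 + 4) := Real.sqrt_pos.mpr (by positivity)
    have h2 : 0 ≤ Real.sqrt f := Real.sqrt_nonneg f
    have h3 : 0 < Real.sqrt f + Real.sqrt (f * c ^ 2 + 4) := by linarith
    exact div_pos (pow_pos h3 2) (by linarith)
  constructor
  · rintro ⟨α, hα, ht⟩
    have hα0 : 0 < α := lt_of_lt_of_le hα₀pos hα
    have hnn : 0 ≤ Real.sqrt (α * f * (1 - f)) * c := by positivity
    have h1 : α * f < α * ((1 - f) * (1 - β) / (1 - β * (1 - f))) := by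
      have he : α * (1 - f) * (1 - β) / (1 - β * (1 - f))
          = α * ((1 - f) * (1 - β) / (1 - β * (1 - f))) := by ring
      rw [he] at ht
      linarith
    have h2 : f < (1 - f) * (1 - β) / (1 - β * (1 - f)) :=
      lt_of_mul_lt_mul_left h1 hα0.le
    rwa [lt_div_iff₀ hD] at h2
  · intro h
    obtain ⟨s, hs_def⟩ : ∃ s : ℝ, s = (1 - f) * (1 - β) / (1 - β * (1 - f)) := ⟨_, rfl⟩
    have hfs : f < s := by rw [hs_def, lt_div_iff₀ hD]; linarith
    obtain ⟨g, hg_def⟩ : ∃ g : ℝ, g = s - f := ⟨_, rfl⟩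
    have hg : 0 < g := by rw [hg_def]; linarith
    obtain ⟨K, hK_def⟩ : ∃ K : ℝ, K = Real.sqrt (f * (1 - f)) * c := ⟨_, rfl⟩
    have hK0 : 0 ≤ K := by rw [hK_def]; positivity
    obtain ⟨α, hα_def⟩ : ∃ α : ℝ,
        α = max (((Real.sqrt f + Real.sqrt (f * c ^ 2 + 4)) ^ 2) / (4 * (1 - f)))
          (max ((2 * K / g) ^ 2) (2 / g)) := ⟨_, rfl⟩
    have hαge : ((Real.sqrt f + Real.sqrt (f * c ^ 2 + 4)) ^ 2) / (4 * (1 - f)) ≤ α := by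
      rw [hα_def]; exact le_max_left _ _
    have hα0 : 0 < α := lt_of_lt_of_le hα₀pos hαge
    refine ⟨α, hαge, ?_⟩
    have hsq : Real.sqrt (α * f * (1 - f)) = Real.sqrt α * Real.sqrt (f * (1 - f)) := by
      rw [mul_assoc, Real.sqrt_mul hα0.le]
    have hsqrtα : 2 * K / g ≤ Real.sqrt α := by
      rw [show (2 * K / g) = Real.sqrt ((2 * K / g) ^ 2) from
        (Real.sqrt_sq (by positivity)).symm]
      apply Real.sqrt_le_sqrt
      rw [hα_def]
      exact le_trans (le_max_left _ _) (le_max_right _ _)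
    have hmul : Real.sqrt α * Real.sqrt α = α := Real.mul_self_sqrt hα0.le
    have h1 : Real.sqrt α * K ≤ α * g / 2 := by
      have hK' : K ≤ Real.sqrt α * g / 2 := by
        rw [div_le_iff₀ hg] at hsqrtα
        linarith
      calc Real.sqrt α * K ≤ Real.sqrt α * (Real.sqrt α * g / 2) :=
            mul_le_mul_of_nonneg_left hK' (Real.sqrt_nonneg α)
        _ = Real.sqrt α * Real.sqrt α * g / 2 := by ring
        _ = α * g / 2 := by rw [hmul]
    have h2 : (1 : ℝ) ≤ α * g / 2 := by
      have hge : 2 / g ≤ α := by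
        rw [hα_def]; exact le_trans (le_max_right _ _) (le_max_right _ _)
      rw [div_le_iff₀ hg] at hge
      linarith
    have hαs : α * (1 - f) * (1 - β) / (1 - β * (1 - f)) = α * s := by
      rw [hs_def, mul_assoc, mul_div_assoc]
    have hKe : Real.sqrt α * Real.sqrt (f * (1 - f)) * c = Real.sqrt α * K := by
      rw [hK_def]; ring
    rw [hsq, hαs, hKe]
    have hsg : α * s = α * f + α * g / 2 + α * g / 2 := by rw [hg_def]; ring
    rw [hsg]
    linarith
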